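/- arXiv:1808.10555 — 5 statements merged into one kernel-verified Lean document; each statement's English description precedes it below -/
import Mathlib

section
/- Under Condition A, for every natural number j, the ratio of squared Jacobi weighted norms satisfies |‖G_j^{(α−β,β)}‖|² / |‖G_{j+1}^{(β−1,α−β−1)}‖|² = (j+1)/(j+α), and moreover 1/2 ≤ (j+1)/(j+α) ≤ 1. -/
open Real

/-- Squared weighted `L²` norm of the Jacobi polynomial `G_j^{(a,b)}` on `(0,1)`. -/
noncomputable def normG2 (a b : ℝ) (j : ℕ) : ℝ :=
  Real.Gamma ((j : ℝ) + a + 1) * Real.Gamma ((j : ℝ) + b + 1) /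
    ((2 * (j : ℝ) + a + b + 1) * Real.Gamma ((j : ℝ) + 1) * Real.Gamma ((j : ℝ) + a + b + 1))

/- Shifting `(a, b, j) ↦ (b - 1, a - 1, j + 1)` keeps the Gamma factors of the numerator and the
factor `2j + a + b + 1`, so only `Γ(j + 1) Γ(j + a + b + 1)` changes, to `Γ(j + 2) Γ(j + a + b)`. -/
theorem normG2_div_normG2_succ {a b : ℝ} (ha : -1 < a) (hb : -1 < b) (hab : 0 < a + b)
    (j : ℕ) :
    normG2 a b j / normG2 (b - 1) (a - 1) (j + 1) = ((j : ℝ) + 1) / (j + (a + b)) := by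
  have hj : (0 : ℝ) ≤ j := Nat.cast_nonneg j
  have hΓa : Gamma (j + a + 1) ≠ 0 := (Gamma_pos_of_pos (by linarith)).ne'
  have hΓb : Gamma (j + b + 1) ≠ 0 := (Gamma_pos_of_pos (by linarith)).ne'
  have hΓj : Gamma (j + 1) ≠ 0 := (Gamma_pos_of_pos (by linarith)).ne'
  have hΓab : Gamma (j + (a + b)) ≠ 0 := (Gamma_pos_of_pos (by linarith)).ne'
  unfold normG2
  push_cast
  rw [show (j : ℝ) + 1 + (b - 1) + 1 = j + b + 1 by ring,
    show (j : ℝ) + 1 + (a - 1) + 1 = j + a + 1 by ring,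
    show 2 * ((j : ℝ) + 1) + (b - 1) + (a - 1) + 1 = 2 * j + a + b + 1 by ring,
    show (j : ℝ) + 1 + (b - 1) + (a - 1) + 1 = j + (a + b) by ring,
    show (j : ℝ) + a + b + 1 = j + (a + b) + 1 by ring,
    Gamma_add_one (by linarith : (j : ℝ) + (a + b) ≠ 0),
    Gamma_add_one (by linarith : (j : ℝ) + 1 ≠ 0)]
  field_simp
  exact div_self (by linarith)

theorem stmt8 (α β : ℝ)
    (hα₁ : 1 < α) (hα₂ : α < 2) (hβ₁ : α - 1 ≤ β) (hβ₂ : β ≤ 1) (j : ℕ) :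
    normG2 (α - β) β j / normG2 (β - 1) (α - β - 1) (j + 1)
        = ((j : ℝ) + 1) / ((j : ℝ) + α)
      ∧ 1 / 2 ≤ ((j : ℝ) + 1) / ((j : ℝ) + α)
      ∧ ((j : ℝ) + 1) / ((j : ℝ) + α) ≤ 1 := by
  have hj : (0 : ℝ) ≤ j := Nat.cast_nonneg j
  have hjα : 0 < (j : ℝ) + α := by linarith
  refine ⟨?_, ?_, ?_⟩
  · simpa only [sub_add_cancel] using
      normG2_div_normG2_succ (a := α - β) (b := β) (by linarith) (by linarith) (by linarith) j
  · rw [div_le_div_iff₀ two_pos hjα]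
    linarith
  · rw [div_le_one hjα]
    linarith
end

section
/- Under Condition A, for every integer j ≥ 1 there exists a constant C > 0 such that for every natural number i: ( (i + 2j + α)² / λ_{i+j}² ) · ( |‖G_i^{(α−β+j, β+j)}‖|² / |‖G_{i+1}^{(β+j−1, α−β+j−1)}‖|² ) ≤ C, where λ_m := −c** · Γ(m+α+1)/Γ(m+1). -/
open Real

/-! The norm ratio collapses to `(i + 1) / (i + 2j + α)` and `λ_m` grows at least like
`|c**| (m + 1)` because `Γ(m + α + 1) ≥ Γ(m + 2)` for `α ≥ 1`, so the whole expression is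
at most `2 / c**²`. -/

theorem normG2_add_one_div_normG2_swap {a b : ℝ} (ha : -1 < a) (hb : -1 < b) (i : ℕ) :
    normG2 (a + 1) (b + 1) i / normG2 b a (i + 1) = (i + 1) / (i + a + b + 2) := by
  have hI : (0 : ℝ) ≤ i := Nat.cast_nonneg i
  have hab : 0 < (i : ℝ) + a + b + 2 := by linarith
  have hΓa := (Gamma_pos_of_pos (show 0 < (i : ℝ) + a + 2 by linarith)).ne'
  have hΓb := (Gamma_pos_of_pos (show 0 < (i : ℝ) + b + 2 by linarith)).ne'
  have hΓi := (Gamma_pos_of_pos (show 0 < (i : ℝ) + 1 by linarith)).ne'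
  have hΓab := (Gamma_pos_of_pos hab).ne'
  unfold normG2
  push_cast
  rw [show (i : ℝ) + (a + 1) + 1 = i + a + 2 by ring,
    show (i : ℝ) + (b + 1) + 1 = i + b + 2 by ring,
    show (i : ℝ) + 1 + b + 1 = i + b + 2 by ring, show (i : ℝ) + 1 + a + 1 = i + a + 2 by ring,
    show (i : ℝ) + (a + 1) + (b + 1) + 1 = (i + a + b + 2) + 1 by ring,
    show (i : ℝ) + 1 + b + a + 1 = i + a + b + 2 by ring,
    show (2 * (i + 1) + b + a + 1 : ℝ) = 2 * i + a + b + 3 by ring,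
    show (2 * i + (a + 1) + (b + 1) + 1 : ℝ) = 2 * i + a + b + 3 by ring,
    Gamma_add_one hab.ne', Gamma_add_one (by linarith : (i : ℝ) + 1 ≠ 0)]
  field_simp
  exact div_self (by linarith)

theorem add_one_le_Gamma_add_div_Gamma {x s : ℝ} (hx : 0 ≤ x) (hs : 1 ≤ s) :
    x + 1 ≤ Gamma (x + s + 1) / Gamma (x + 1) := by
  have hΓ := Gamma_pos_of_pos (show 0 < x + 1 by linarith)
  rw [le_div_iff₀ hΓ, ← Gamma_add_one (by linarith)]
  exact Gamma_strictMonoOn_Ici.monotoneOn (Set.mem_Ici.2 (by linarith))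
    (Set.mem_Ici.2 (by linarith)) (by linarith)

theorem sin_pi_mul_neg {x : ℝ} (h₁ : 1 < x) (h₂ : x < 2) : sin (π * x) < 0 := by
  rw [show π * x = π * (x - 1) + π by ring, sin_add_pi, neg_neg_iff_pos]
  exact sin_pos_of_pos_of_lt_pi (by nlinarith [pi_pos]) (by nlinarith [pi_pos])

theorem sin_pi_mul_add_sin_pi_mul_pos {x y : ℝ} (hx : 0 < x) (hx₁ : x ≤ 1) (hy : 0 < y)
    (hy₁ : y ≤ 1) (hxy : x + y < 2) : 0 < sin (π * x) + sin (π * y) := by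
  have hsx : 0 ≤ sin (π * x) :=
    sin_nonneg_of_nonneg_of_le_pi (by positivity) (by nlinarith [pi_pos])
  have hsy : 0 ≤ sin (π * y) :=
    sin_nonneg_of_nonneg_of_le_pi (by positivity) (by nlinarith [pi_pos])
  rcases hy₁.lt_or_eq with hy₁ | rfl
  · linarith [sin_pos_of_pos_of_lt_pi (by positivity : 0 < π * y) (by nlinarith [pi_pos])]
  · linarith [sin_pos_of_pos_of_lt_pi (by positivity : 0 < π * x) (by nlinarith [pi_pos])]

theorem stmt10_general (α β css : ℝ)
    (hα₁ : 1 < α) (hα₂ : α < 2) (hβ₁ : α - 1 ≤ β) (hβ₂ : β ≤ 1)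
    (hcss : css = Real.sin (Real.pi * α) /
      (Real.sin (Real.pi * (α - β)) + Real.sin (Real.pi * β)))
    (lam : ℕ → ℝ)
    (hlam : ∀ m : ℕ, lam m = -css * (Real.Gamma ((m : ℝ) + α + 1) / Real.Gamma ((m : ℝ) + 1)))
    (j : ℕ) :
    ∃ C : ℝ, 0 < C ∧ ∀ i : ℕ,
      (((i : ℝ) + 2 * (j : ℝ) + α) ^ 2 / (lam (i + j)) ^ 2)
        * (normG2 (α - β + j) (β + j) i / normG2 (β + j - 1) (α - β + j - 1) (i + 1))
      ≤ C := by
  have hc : css ≠ 0 := by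
    rw [hcss]
    exact div_ne_zero (sin_pi_mul_neg hα₁ hα₂).ne
      (sin_pi_mul_add_sin_pi_mul_pos (by linarith) (by linarith) (by linarith) hβ₂
        (by linarith)).ne'
  refine ⟨2 / css ^ 2, by positivity, fun i => ?_⟩
  have hI : (0 : ℝ) ≤ i := Nat.cast_nonneg i
  have hJ : (0 : ℝ) ≤ j := Nat.cast_nonneg j
  have hratio : normG2 (α - β + j) (β + j) i / normG2 (β + j - 1) (α - β + j - 1) (i + 1)
      = (i + 1) / (i + 2 * j + α) := by
    have := normG2_add_one_div_normG2_swap (a := α - β + j - 1) (b := β + j - 1)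
      (by linarith) (by linarith) i
    rwa [sub_add_cancel, sub_add_cancel,
      show (i : ℝ) + (α - β + j - 1) + (β + j - 1) + 2 = i + 2 * j + α by ring] at this
  have hR := add_one_le_Gamma_add_div_Gamma (Nat.cast_nonneg (i + j)) hα₁.le
  set R := Gamma (((i + j : ℕ) : ℝ) + α + 1) / Gamma (((i + j : ℕ) : ℝ) + 1)
  push_cast at hR
  have hx : (0 : ℝ) < i + 2 * j + α := by linarith
  rw [hratio, hlam,
    show ((i : ℝ) + 2 * j + α) ^ 2 / (-css * R) ^ 2 * ((i + 1) / (i + 2 * j + α))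
      = (i + 2 * j + α) * (i + 1) / R ^ 2 / css ^ 2 by field_simp]
  gcongr
  rw [div_le_iff₀ (by positivity)]
  nlinarith [pow_le_pow_left₀ (by positivity) hR 2]

theorem stmt10 (α β css : ℝ)
    (hα₁ : 1 < α) (hα₂ : α < 2) (hβ₁ : α - 1 ≤ β) (hβ₂ : β ≤ 1)
    (hcss : css = Real.sin (Real.pi * α) /
      (Real.sin (Real.pi * (α - β)) + Real.sin (Real.pi * β)))
    (lam : ℕ → ℝ)
    (hlam : ∀ m : ℕ, lam m = -css * (Real.Gamma ((m : ℝ) + α + 1) / Real.Gamma ((m : ℝ) + 1)))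
    (j : ℕ) (hj : 1 ≤ j) :
    ∃ C : ℝ, 0 < C ∧ ∀ i : ℕ,
      (((i : ℝ) + 2 * (j : ℝ) + α) ^ 2 / (lam (i + j)) ^ 2)
        * (normG2 (α - β + j) (β + j) i / normG2 (β + j - 1) (α - β + j - 1) (i + 1))
      ≤ C :=
  stmt10_general α β css hα₁ hα₂ hβ₁ hβ₂ hcss lam hlam j
end

section
/- Fix reals α, β with 1 < α < 2 and α−1 < β ≤ 1 (i.e. 0 ≤ r < 1). Let (f_i)_{i∈ℕ} be a real sequence with Σ_{i=0}^∞ f_i² / |‖G_i^{(β,α−β)}‖|² < ∞. Then the series Σ_{i=0}^∞ ( Γ(i+α)/Γ(i+1+α) ) · ( f_i / |‖G_i^{(β,α−β)}‖|² ) · ( Γ(i+1+α−β) / ( Γ(i+2) Γ(α−β) ) ) converges absolutely. (This series equals Σ_i μ_i c_i G_{i+1}^{(β−1,α−β−1)}(0) up to signs, and its convergence is what makes the flux boundary value at x = 0 well defined.) -/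
/-!
By Cauchy–Schwarz in `ℓ²` with weights `1 / ‖G_i‖²`, the series converges absolutely as soon as
`∑ c_i² / ‖G_i‖² < ∞`, where `c_i` is the Gamma factor multiplying `f_i / ‖G_i‖²`.
Gautschi's inequality `Γ(x + s) ≍ Γ(x) x^s` for `0 ≤ s ≤ 1`, a consequence of the log-convexity
of `Γ`, gives `c_i ≲ (i + 1)^(α - β - 2)` and `1 / ‖G_i‖² ≲ i + 1`. Hence
`c_i² / ‖G_i‖² ≲ (i + 1)^(2(α - β) - 3)`, which is summable since `α - β < 1`.
-/

open Real

lemma rpow_add_le_two_mul_rpow {x a b : ℝ} (ha : 0 ≤ a) (hax : a ≤ x) (hb0 : 0 ≤ b)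
    (hb1 : b ≤ 1) : (x + a) ^ b ≤ 2 * x ^ b := by
  have hx : 0 ≤ x := ha.trans hax
  have htwo : (2 : ℝ) ^ b ≤ 2 := by
    simpa using Real.rpow_le_rpow_of_exponent_le (by norm_num : (1 : ℝ) ≤ 2) hb1
  calc (x + a) ^ b ≤ (2 * x) ^ b := by gcongr; linarith
    _ = 2 ^ b * x ^ b := Real.mul_rpow zero_le_two hx
    _ ≤ 2 * x ^ b := by gcongr

lemma Real.Gamma_add_le_Gamma_mul_rpow {x s : ℝ} (hx : 0 < x) (hs0 : 0 ≤ s) (hs1 : s ≤ 1) :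
    Gamma (x + s) ≤ Gamma x * x ^ s := by
  obtain rfl | hs0 := hs0.eq_or_lt
  · simp
  obtain rfl | hs1 := hs1.eq_or_lt
  · rw [Gamma_add_one hx.ne', rpow_one, mul_comm]
  have hconv := Gamma_mul_add_mul_le_rpow_Gamma_mul_rpow_Gamma hx (by linarith : 0 < x + 1)
    (by linarith : 0 < 1 - s) hs0 (by ring)
  rw [show (1 - s) * x + s * (x + 1) = x + s by ring, Gamma_add_one hx.ne',
    mul_rpow hx.le (Gamma_pos_of_pos hx).le] at hconv
  calc Gamma (x + s) ≤ Gamma x ^ (1 - s) * (x ^ s * Gamma x ^ s) := hconv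
    _ = Gamma x * x ^ s := by
      rw [mul_left_comm, ← rpow_add (Gamma_pos_of_pos hx), sub_add_cancel, rpow_one, mul_comm]

lemma Real.Gamma_mul_rpow_le_two_mul_Gamma_add {x s : ℝ} (hx : 1 ≤ x) (hs0 : 0 ≤ s)
    (hs1 : s ≤ 1) : Gamma x * x ^ s ≤ 2 * Gamma (x + s) := by
  have hx0 : 0 < x := by linarith
  have hpow : 0 < x ^ (1 - s) := rpow_pos_of_pos hx0 _
  refine le_of_mul_le_mul_right ?_ hpow
  calc Gamma x * x ^ s * x ^ (1 - s) = Gamma (x + s + (1 - s)) := by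
        rw [mul_assoc, ← rpow_add hx0, add_sub_cancel, rpow_one, add_add_sub_cancel,
          Gamma_add_one hx0.ne', mul_comm]
    _ ≤ Gamma (x + s) * (x + s) ^ (1 - s) :=
        Gamma_add_le_Gamma_mul_rpow (by linarith) (by linarith) (by linarith)
    _ ≤ Gamma (x + s) * (2 * x ^ (1 - s)) := by
        gcongr
        exact rpow_add_le_two_mul_rpow hs0 (by linarith) (by linarith) (by linarith)
    _ = 2 * Gamma (x + s) * x ^ (1 - s) := by ring

lemma normG2_pos {a b : ℝ} (ha : -1 < a) (hb : -1 < b) (hab : -1 < a + b) (j : ℕ) :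
    0 < normG2 a b j := by
  have hj : (0 : ℝ) ≤ j := j.cast_nonneg
  have h₁ := Gamma_pos_of_pos (by linarith : (0 : ℝ) < j + a + 1)
  have h₂ := Gamma_pos_of_pos (by linarith : (0 : ℝ) < j + b + 1)
  have h₃ := Gamma_pos_of_pos (by linarith : (0 : ℝ) < j + 1)
  have h₄ := Gamma_pos_of_pos (by linarith : (0 : ℝ) < j + a + b + 1)
  have h₅ : (0 : ℝ) < 2 * j + a + b + 1 := by linarith
  unfold normG2
  positivity

lemma inv_normG2_le {a b : ℝ} (ha0 : 0 ≤ a) (ha1 : a ≤ 1) (hb0 : 0 ≤ b) (hb1 : b ≤ 1) (j : ℕ) :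
    (normG2 a b j)⁻¹ ≤ 12 * ((j : ℝ) + 1) := by
  have hj : (0 : ℝ) ≤ j := j.cast_nonneg
  have hΓa := Gamma_pos_of_pos (by linarith : (0 : ℝ) < j + a + 1)
  have hΓb := Gamma_pos_of_pos (by linarith : (0 : ℝ) < j + b + 1)
  have hΓ₁ := Gamma_pos_of_pos (by linarith : (0 : ℝ) < j + 1)
  have hΓab : Gamma (j + a + b + 1) ≤ Gamma (j + a + 1) * (2 * ((j : ℝ) + 1) ^ b) := by
    calc Gamma (j + a + b + 1) = Gamma (j + a + 1 + b) := by ring_nf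
      _ ≤ Gamma (j + a + 1) * (j + a + 1) ^ b :=
          Gamma_add_le_Gamma_mul_rpow (by linarith) hb0 hb1
      _ ≤ Gamma (j + a + 1) * (2 * ((j : ℝ) + 1) ^ b) := by
          gcongr
          rw [add_right_comm]
          exact rpow_add_le_two_mul_rpow ha0 (by linarith) hb0 hb1
  have hΓ₁b : Gamma (j + 1) * ((j : ℝ) + 1) ^ b ≤ 2 * Gamma (j + b + 1) := by
    rw [add_right_comm]
    exact Gamma_mul_rpow_le_two_mul_Gamma_add (by linarith) hb0 hb1
  rw [normG2, inv_div, div_le_iff₀ (by positivity)]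
  calc (2 * j + a + b + 1) * Gamma (j + 1) * Gamma (j + a + b + 1)
      ≤ (3 * ((j : ℝ) + 1)) * Gamma (j + 1) * (Gamma (j + a + 1) * (2 * ((j : ℝ) + 1) ^ b)) := by
        gcongr
        linarith
    _ = 6 * ((j : ℝ) + 1) * Gamma (j + a + 1) * (Gamma (j + 1) * ((j : ℝ) + 1) ^ b) := by ring
    _ ≤ 6 * ((j : ℝ) + 1) * Gamma (j + a + 1) * (2 * Gamma (j + b + 1)) := by gcongr
    _ = 12 * ((j : ℝ) + 1) * (Gamma (j + a + 1) * Gamma (j + b + 1)) := by ring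

noncomputable def fluxCoeff (α β : ℝ) (i : ℕ) : ℝ :=
  Gamma ((i : ℝ) + α) / Gamma ((i : ℝ) + 1 + α)
    * (Gamma ((i : ℝ) + 1 + α - β) / (Gamma ((i : ℝ) + 2) * Gamma (α - β)))

section fluxCoeff

variable {α β : ℝ}

lemma fluxCoeff_nonneg (hα : 0 < α) (hβ : β < α) (i : ℕ) : 0 ≤ fluxCoeff α β i := by
  have hi : (0 : ℝ) ≤ i := i.cast_nonneg
  have h₁ := Gamma_pos_of_pos (by linarith : (0 : ℝ) < i + 1 + α - β)
  have h₂ := Gamma_pos_of_pos (sub_pos.mpr hβ)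
  unfold fluxCoeff
  positivity

lemma fluxCoeff_le (hα : 1 ≤ α) (hβ₁ : α - 1 ≤ β) (hβ₂ : β < α) (i : ℕ) :
    fluxCoeff α β i ≤ ((i : ℝ) + 1) ^ (α - β - 2) / Gamma (α - β) := by
  have hi : (0 : ℝ) ≤ i := i.cast_nonneg
  have hu : (0 : ℝ) < i + 1 := by linarith
  have hα₀ : (0 : ℝ) < i + α := by linarith
  have hΓα := Gamma_pos_of_pos hα₀
  have hΓ₁ := Gamma_pos_of_pos hu
  have hg := Gamma_pos_of_pos (sub_pos.mpr hβ₂)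
  have hR : Gamma ((i : ℝ) + 1 + α - β) ≤ Gamma (i + 1) * ((i : ℝ) + 1) ^ (α - β) := by
    rw [add_sub_assoc]
    exact Gamma_add_le_Gamma_mul_rpow hu (by linarith) (by linarith)
  have hflux : fluxCoeff α β i
      = Gamma ((i : ℝ) + 1 + α - β) / ((i + α) * (i + 1) * Gamma (i + 1) * Gamma (α - β)) := by
    rw [fluxCoeff, add_right_comm, Gamma_add_one hα₀.ne',
      show (i : ℝ) + 2 = i + 1 + 1 by ring, Gamma_add_one hu.ne']
    field_simp
  rw [hflux, rpow_sub hu, rpow_two]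
  calc Gamma ((i : ℝ) + 1 + α - β) / ((i + α) * (i + 1) * Gamma (i + 1) * Gamma (α - β))
      ≤ Gamma (i + 1) * ((i : ℝ) + 1) ^ (α - β)
          / ((i + 1) * (i + 1) * Gamma (i + 1) * Gamma (α - β)) := by
        gcongr
    _ = ((i : ℝ) + 1) ^ (α - β) / ((i : ℝ) + 1) ^ 2 / Gamma (α - β) := by
        field_simp

end fluxCoeff

lemma summable_abs_mul_div_of_summable_sq_div {w f N : ℕ → ℝ} (hN : ∀ i, 0 ≤ N i)
    (hw : Summable fun i => w i ^ 2 / N i) (hf : Summable fun i => f i ^ 2 / N i) :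
    Summable fun i => |w i * f i / N i| := by
  refine Summable.of_nonneg_of_le (fun i => abs_nonneg _) (fun i => ?_) ((hw.add hf).div_const 2)
  have hamgm : |w i| * |f i| ≤ (w i ^ 2 + f i ^ 2) / 2 := by
    nlinarith [two_mul_le_add_sq |w i| |f i|, sq_abs (w i), sq_abs (f i)]
  calc |w i * f i / N i| = |w i| * |f i| / N i := by
        rw [abs_div, abs_mul, abs_of_nonneg (hN i)]
    _ ≤ (w i ^ 2 + f i ^ 2) / 2 / N i := by gcongr; exact hN i
    _ = (w i ^ 2 / N i + f i ^ 2 / N i) / 2 := by ring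

lemma summable_natCast_add_one_rpow {p : ℝ} (hp : p < -1) :
    Summable fun i : ℕ => ((i : ℝ) + 1) ^ p := by
  simpa using (summable_nat_add_iff 1).mpr (Real.summable_nat_rpow.mpr hp)

lemma summable_fluxCoeff_sq_div_normG2 {α β : ℝ} (hα : 1 < α) (hβ₁ : α - 1 < β) (hβ₂ : β ≤ 1) :
    Summable fun i => fluxCoeff α β i ^ 2 / normG2 β (α - β) i := by
  have hN : ∀ i, 0 < normG2 β (α - β) i := normG2_pos (by linarith) (by linarith) (by linarith)
  refine Summable.of_nonneg_of_le (fun i => div_nonneg (sq_nonneg _) (hN i).le) (fun i => ?_)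
    ((summable_natCast_add_one_rpow (by linarith : 2 * (α - β) - 3 < -1)).mul_left
      (12 / Gamma (α - β) ^ 2))
  have hu : (0 : ℝ) < i + 1 := by positivity
  have hpow : ((i : ℝ) + 1) ^ (2 * (α - β) - 3) = (((i : ℝ) + 1) ^ (α - β - 2)) ^ 2 * (i + 1) := by
    rw [← rpow_natCast, ← rpow_mul hu.le, ← rpow_add_one hu.ne']
    ring_nf
  have hA₀ : 0 ≤ fluxCoeff α β i := fluxCoeff_nonneg (by linarith) (by linarith) i
  have hA := fluxCoeff_le hα.le hβ₁.le (by linarith) i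
  have hN₁ : (normG2 β (α - β) i)⁻¹ ≤ 12 * ((i : ℝ) + 1) :=
    inv_normG2_le (by linarith) hβ₂ (by linarith) (by linarith) i
  calc fluxCoeff α β i ^ 2 / normG2 β (α - β) i
      = fluxCoeff α β i ^ 2 * (normG2 β (α - β) i)⁻¹ := div_eq_mul_inv _ _
    _ ≤ (((i : ℝ) + 1) ^ (α - β - 2) / Gamma (α - β)) ^ 2 * (12 * ((i : ℝ) + 1)) := by
        gcongr
        exact inv_nonneg.mpr (hN i).le
    _ = 12 / Gamma (α - β) ^ 2 * ((i : ℝ) + 1) ^ (2 * (α - β) - 3) := by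
        rw [hpow]
        ring

theorem stmt11_general (α β : ℝ)
    (hα₁ : 1 < α) (hβ₁ : α - 1 < β) (hβ₂ : β ≤ 1)
    (f : ℕ → ℝ)
    (hf : Summable fun i : ℕ => (f i) ^ 2 / normG2 β (α - β) i) :
    Summable fun i : ℕ =>
      |(Real.Gamma ((i : ℝ) + α) / Real.Gamma ((i : ℝ) + 1 + α))
        * (f i / normG2 β (α - β) i)
        * (Real.Gamma ((i : ℝ) + 1 + α - β)
            / (Real.Gamma ((i : ℝ) + 2) * Real.Gamma (α - β)))| := by
  have hN : ∀ i, 0 ≤ normG2 β (α - β) i := fun i =>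
    (normG2_pos (by linarith) (by linarith) (by linarith) i).le
  refine (summable_abs_mul_div_of_summable_sq_div hN
    (summable_fluxCoeff_sq_div_normG2 hα₁ hβ₁ hβ₂) hf).congr fun i => ?_
  congr 1
  rw [fluxCoeff]
  ring

theorem stmt11 (α β : ℝ)
    (hα₁ : 1 < α) (hα₂ : α < 2) (hβ₁ : α - 1 < β) (hβ₂ : β ≤ 1)
    (f : ℕ → ℝ)
    (hf : Summable fun i : ℕ => (f i) ^ 2 / normG2 β (α - β) i) :
    Summable fun i : ℕ =>
      |(Real.Gamma ((i : ℝ) + α) / Real.Gamma ((i : ℝ) + 1 + α))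
        * (f i / normG2 β (α - β) i)
        * (Real.Gamma ((i : ℝ) + 1 + α - β)
            / (Real.Gamma ((i : ℝ) + 2) * Real.Gamma (α - β)))| :=
  stmt11_general α β hα₁ hβ₁ hβ₂ f hf
end

section
/- Under Condition A, fix an integer j ≥ 1. Let (f_i)_{i∈ℕ} be a real sequence, and set λ_i := −c** · Γ(i+1+α)/Γ(i+1) and c_i := f_i / ( λ_i · |‖G_i^{(β,α−β)}‖|² ). If Σ_{i=0}^∞ f_{i+j}² · ( Γ(i+2j+α)/Γ(i+j+α+1) )² · |‖G_{i+1}^{(β+j−1, α−β+j−1)}‖|² / ( |‖G_{i+j}^{(β,α−β)}‖|² )² < ∞, then Σ_{i=0}^∞ c_{i+j}² · ( Γ(i+2j+α+1)/Γ(i+j+α+1) )² · |‖G_i^{(α−β+j, β+j)}‖|² < ∞. (This is the coefficient form of the shift theorem: if D^{j−1}f ∈ L²_{ρ^{(β+j−1, α−β+j−1)}}(0,1), then D^j( u/ρ^{(α−β,β)} ) ∈ L²_{ρ^{(α−β+j, β+j)}}(0,1) for the spectral solution u = ρ^{(α−β,β)} Σ_i c_i G_i^{(α−β,β)}.) -/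
open Real

lemma normG2_comm (a b : ℝ) (k : ℕ) : normG2 a b k = normG2 b a k := by
  unfold normG2
  ring_nf

lemma add_add_two_mul_normG2_add_one_add_one (a b : ℝ) (k : ℕ) :
    (k + a + b + 2) * normG2 (a + 1) (b + 1) k = (k + 1) * normG2 a b (k + 1) := by
  unfold normG2
  push_cast
  rw [Gamma_add_one (Nat.cast_add_one_ne_zero k)]
  rcases eq_or_ne ((k : ℝ) + a + b + 2) 0 with hs | hs
  · -- both sides vanish, the right one through the junk value `Gamma 0 = 0`
    have : (k : ℝ) + 1 + a + b + 1 = 0 := by linarith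
    simp [hs, this]
  · rw [show (k : ℝ) + (a + 1) + (b + 1) + 1 = (k + a + b + 2) + 1 by ring, Gamma_add_one hs]
    field_simp
    ring_nf

lemma Gamma_add_one_div_Gamma_add_add_one_le {α x : ℝ} (hα : 1 ≤ α) (hx : 1 ≤ x) :
    Gamma (x + 1) / Gamma (x + α + 1) ≤ (x + α)⁻¹ := by
  have hxα : 0 < x + α := by linarith
  rw [Gamma_add_one hxα.ne', div_le_iff₀ (mul_pos hxα (Gamma_pos_of_pos hxα)),
    inv_mul_cancel_left₀ hxα.ne']
  exact Gamma_strictMonoOn_Ici.monotoneOn (by simp; linarith) (by simp; linarith) (by linarith)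

lemma coeff_term_eq_mul_source_term (α β css y : ℝ) (hα : 0 < α) (i j : ℕ) :
    (y / (-css * (Gamma (((i + j : ℕ) : ℝ) + 1 + α) / Gamma (((i + j : ℕ) : ℝ) + 1))
        * normG2 β (α - β) (i + j))) ^ 2
      * (Gamma ((i : ℝ) + 2 * j + α + 1) / Gamma ((i : ℝ) + j + α + 1)) ^ 2
      * normG2 (α - β + j) (β + j) i
    = (i + 1) * (i + 2 * j + α) * (Gamma ((i : ℝ) + j + 1) / Gamma ((i : ℝ) + j + α + 1)) ^ 2
        / css ^ 2
      * (y ^ 2 * (Gamma ((i : ℝ) + 2 * j + α) / Gamma ((i : ℝ) + j + α + 1)) ^ 2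
        * normG2 (β + j - 1) (α - β + j - 1) (i + 1) / normG2 β (α - β) (i + j) ^ 2) := by
  have hshift := add_add_two_mul_normG2_add_one_add_one (β + j - 1) (α - β + j - 1) i
  rw [sub_add_cancel, sub_add_cancel, ← normG2_comm] at hshift
  have hs : (i : ℝ) + 2 * j + α ≠ 0 := by positivity
  rw [Gamma_add_one hs, mul_div_assoc', div_mul_eq_mul_div, div_div_eq_mul_div]
  push_cast
  rw [show (i : ℝ) + j + 1 + α = i + j + α + 1 by ring]
  linear_combination
    y ^ 2 * Gamma ((i : ℝ) + j + 1) ^ 2 * Gamma ((i : ℝ) + 2 * j + α) ^ 2 * (i + 2 * j + α)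
      / (css ^ 2 * Gamma ((i : ℝ) + j + α + 1) ^ 4 * normG2 β (α - β) (i + j) ^ 2) * hshift

lemma mul_sq_Gamma_div_Gamma_le_two {α : ℝ} (hα : 1 ≤ α) (i : ℕ) {j : ℕ} (hj : 1 ≤ j) :
    (i + 1) * (i + 2 * j + α) * (Gamma ((i : ℝ) + j + 1) / Gamma ((i : ℝ) + j + α + 1)) ^ 2
      ≤ 2 := by
  have hj' : (1 : ℝ) ≤ j := by exact_mod_cast hj
  have hxα : 0 < (i : ℝ) + j + α := by positivity
  have hratio := Gamma_add_one_div_Gamma_add_add_one_le hα (x := i + j)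
    (by linarith [(i.cast_nonneg : (0 : ℝ) ≤ i)])
  have hsq :
      (Gamma ((i : ℝ) + j + 1) / Gamma ((i : ℝ) + j + α + 1)) ^ 2 ≤ ((i + j + α) ^ 2)⁻¹ := by
    rw [← inv_pow]
    exact pow_le_pow_left₀ (by positivity) hratio 2
  calc (i + 1) * (i + 2 * j + α) * (Gamma ((i : ℝ) + j + 1) / Gamma ((i : ℝ) + j + α + 1)) ^ 2
      ≤ 2 * (i + j + α) ^ 2 * ((i + j + α) ^ 2)⁻¹ := by
        refine mul_le_mul ?_ hsq (by positivity) (by positivity)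
        nlinarith
    _ = 2 := by field_simp

theorem stmt14_general (α β css : ℝ)
    (hα₁ : 1 < α)
    (j : ℕ) (hj : 1 ≤ j)
    (f lam c : ℕ → ℝ)
    (hlam : ∀ i : ℕ, lam i = -css * (Real.Gamma ((i : ℝ) + 1 + α) / Real.Gamma ((i : ℝ) + 1)))
    (hc : ∀ i : ℕ, c i = f i / (lam i * normG2 β (α - β) i))
    (hf : Summable fun i : ℕ =>
      (f (i + j)) ^ 2 * (Real.Gamma ((i : ℝ) + 2 * (j : ℝ) + α)
          / Real.Gamma ((i : ℝ) + (j : ℝ) + α + 1)) ^ 2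
        * normG2 (β + j - 1) (α - β + j - 1) (i + 1)
        / (normG2 β (α - β) (i + j)) ^ 2) :
    Summable fun i : ℕ =>
      (c (i + j)) ^ 2 * (Real.Gamma ((i : ℝ) + 2 * (j : ℝ) + α + 1)
          / Real.Gamma ((i : ℝ) + (j : ℝ) + α + 1)) ^ 2
        * normG2 (α - β + j) (β + j) i := by
  refine hf.abs.mul_left (2 / css ^ 2) |>.of_norm_bounded fun i => ?_
  rw [hc, hlam, coeff_term_eq_mul_source_term α β css _ (by linarith) i j, norm_mul,
    Real.norm_eq_abs, Real.norm_eq_abs, abs_of_nonneg (by positivity)]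
  gcongr
  exact mul_sq_Gamma_div_Gamma_le_two hα₁.le i hj

theorem stmt14 (α β css : ℝ)
    (hα₁ : 1 < α) (hα₂ : α < 2) (hβ₁ : α - 1 ≤ β) (hβ₂ : β ≤ 1)
    (hcss : css = Real.sin (Real.pi * α) /
      (Real.sin (Real.pi * (α - β)) + Real.sin (Real.pi * β)))
    (j : ℕ) (hj : 1 ≤ j)
    (f lam c : ℕ → ℝ)
    (hlam : ∀ i : ℕ, lam i = -css * (Real.Gamma ((i : ℝ) + 1 + α) / Real.Gamma ((i : ℝ) + 1)))
    (hc : ∀ i : ℕ, c i = f i / (lam i * normG2 β (α - β) i))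
    (hf : Summable fun i : ℕ =>
      (f (i + j)) ^ 2 * (Real.Gamma ((i : ℝ) + 2 * (j : ℝ) + α)
          / Real.Gamma ((i : ℝ) + (j : ℝ) + α + 1)) ^ 2
        * normG2 (β + j - 1) (α - β + j - 1) (i + 1)
        / (normG2 β (α - β) (i + j)) ^ 2) :
    Summable fun i : ℕ =>
      (c (i + j)) ^ 2 * (Real.Gamma ((i : ℝ) + 2 * (j : ℝ) + α + 1)
          / Real.Gamma ((i : ℝ) + (j : ℝ) + α + 1)) ^ 2
        * normG2 (α - β + j) (β + j) i :=
  stmt14_general α β css hα₁ j hj f lam c hlam hc hf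
end

section
/- Let α, β be reals with 1 < α < 2 and α−1 < β < 1, and let r = sin(πβ)/(sin(π(α−β)) + sin(πβ)). Then for every natural number n: r · Γ(β+n)/Γ(2−α+β+n) + (1−r) · Γ(α−β−n−1)/Γ(1−β−n) = 0. (This cancellation eliminates the hypergeometric terms in the computation of the two-sided fractional integral of (1−x)^{α−β−1} x^{β−1} x^n.) -/
/-!
Both quotients are linked by the reflection formula `Γ(z) Γ(1 - z) = π / sin (π z)`, applied at
`z = β + n` and at `z = α - β - n - 1`: the second quotient equals the first multiplied by
`-sin (π β) / sin (π (α - β))`, and the weights `r`, `1 - r` are exactly the ones that cancel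
this factor.
-/

open Real

theorem Real.Gamma_div_Gamma_one_sub_eq {x y : ℝ} (hx : sin (π * x) ≠ 0) (hy : sin (π * y) ≠ 0) :
    Gamma y / Gamma (1 - x) = sin (π * x) / sin (π * y) * (Gamma x / Gamma (1 - y)) := by
  have hx' := Gamma_mul_Gamma_one_sub x
  have hy' := Gamma_mul_Gamma_one_sub y
  have hΓx : Gamma x * Gamma (1 - x) ≠ 0 := by rw [hx']; exact div_ne_zero pi_ne_zero hx
  have hΓy : Gamma y * Gamma (1 - y) ≠ 0 := by rw [hy']; exact div_ne_zero pi_ne_zero hy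
  obtain ⟨-, hΓx₁⟩ := mul_ne_zero_iff.mp hΓx
  obtain ⟨-, hΓy₁⟩ := mul_ne_zero_iff.mp hΓy
  rw [eq_div_iff hx] at hx'
  rw [eq_div_iff hy] at hy'
  field_simp
  rw [mul_comm x π]
  linear_combination hy' - hx'

theorem Real.sin_pi_mul_add_natCast (x : ℝ) (n : ℕ) :
    sin (π * (x + n)) = (-1) ^ n * sin (π * x) := by
  rw [mul_add, mul_comm π (n : ℝ), sin_add_nat_mul_pi]

theorem Real.sin_pi_mul_sub_natCast_sub_one (x : ℝ) (n : ℕ) :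
    sin (π * (x - n - 1)) = -((-1) ^ n * sin (π * x)) := by
  rw [show π * (x - n - 1) = π * x - n * π - π by ring, sin_sub_pi, sin_sub_nat_mul_pi]

theorem Real.Gamma_sub_natCast_sub_one_div_Gamma_one_sub_sub_natCast {a b : ℝ}
    (ha : sin (π * a) ≠ 0) (hb : sin (π * b) ≠ 0) (n : ℕ) :
    Gamma (a - n - 1) / Gamma (1 - b - n)
      = -(sin (π * b) / sin (π * a)) * (Gamma (b + n) / Gamma (2 - a + n)) := by
  have hsb : sin (π * (b + n)) ≠ 0 := by
    rw [sin_pi_mul_add_natCast]; exact mul_ne_zero (by simp) hb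
  have hsa : sin (π * (a - n - 1)) ≠ 0 := by
    rw [sin_pi_mul_sub_natCast_sub_one]; exact neg_ne_zero.mpr (mul_ne_zero (by simp) ha)
  have := Gamma_div_Gamma_one_sub_eq hsb hsa
  rw [show 1 - (b + n) = 1 - b - n by ring, show 1 - (a - n - 1) = 2 - a + n by ring,
    sin_pi_mul_add_natCast, sin_pi_mul_sub_natCast_sub_one] at this
  rw [this]
  field_simp

theorem stmt15_general (α β r : ℝ)
    (hα₁ : 1 < α) (hβ₁ : α - 1 < β) (hβ₂ : β < 1)
    (hr : r = Real.sin (Real.pi * β) /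
      (Real.sin (Real.pi * (α - β)) + Real.sin (Real.pi * β)))
    (n : ℕ) :
    r * (Real.Gamma (β + n) / Real.Gamma (2 - α + β + n))
      + (1 - r) * (Real.Gamma (α - β - n - 1) / Real.Gamma (1 - β - n)) = 0 := by
  have hsβ : 0 < sin (π * β) :=
    sin_pos_of_pos_of_lt_pi (by nlinarith [pi_pos]) (by nlinarith [pi_pos])
  have hsαβ : 0 < sin (π * (α - β)) :=
    sin_pos_of_pos_of_lt_pi (by nlinarith [pi_pos]) (by nlinarith [pi_pos])
  rw [Gamma_sub_natCast_sub_one_div_Gamma_one_sub_sub_natCast hsαβ.ne' hsβ.ne',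
    show 2 - (α - β) + n = 2 - α + β + n by ring, hr]
  field_simp
  ring

theorem stmt15 (α β r : ℝ)
    (hα₁ : 1 < α) (hα₂ : α < 2) (hβ₁ : α - 1 < β) (hβ₂ : β < 1)
    (hr : r = Real.sin (Real.pi * β) /
      (Real.sin (Real.pi * (α - β)) + Real.sin (Real.pi * β)))
    (n : ℕ) :
    r * (Real.Gamma (β + n) / Real.Gamma (2 - α + β + n))
      + (1 - r) * (Real.Gamma (α - β - n - 1) / Real.Gamma (1 - β - n)) = 0 :=
  stmt15_general α β r hα₁ hβ₁ hβ₂ hr n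
end
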